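/- Let α ∈ (−1,1), κ := √(1−α²), and for σ > 0 define ψ_σ(x) = (σ/π)^{1/4} e^{−σx²/2}. Let p_∞(x,y) := e^{−x²/2 − αxy − y²/2}, set ν_∞ := √(2π/(1+κ)), and define the integral operator P̂_∞ on L²(ℝ) by P̂_∞[φ](x) := ν_∞^{−1} ∫_ℝ p_∞(x,y) φ(y) dy. Then: (i) P̂_∞[ψ_κ] = ψ_κ; and (ii) there exists μ < 1 such that for every φ ∈ L²(ℝ) with ⟨ψ_κ, φ⟩_{L²(ℝ)} = 0, one has ‖P̂_∞[φ]‖_{L²(ℝ)} ≤ μ ‖φ‖_{L²(ℝ)}. -/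

import Mathlib

/-- The normalized Gaussian `ψ_σ(x) = (σ/π)^{1/4} e^{-σ x²/2}`. -/
noncomputable def psi (σ : ℝ) (x : ℝ) : ℝ :=
  (σ / Real.pi) ^ ((1 : ℝ) / 4) * Real.exp (-σ * x ^ 2 / 2)

/-- The kernel `p_∞(x,y) = e^{-x²/2 - αxy - y²/2}`. -/
noncomputable def pInf (α : ℝ) (x y : ℝ) : ℝ :=
  Real.exp (-x ^ 2 / 2 - α * x * y - y ^ 2 / 2)

/-- The normalized Gaussian transfer operator `P̂_∞`. -/
noncomputable def Phat (α : ℝ) (φ : ℝ → ℝ) (x : ℝ) : ℝ :=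
  (Real.sqrt (2 * Real.pi / (1 + Real.sqrt (1 - α ^ 2))))⁻¹ * ∫ y : ℝ, pInf α x y * φ y

/-!
`P̂_∞` is the Mehler operator `K_t` with `t = -α/(1+κ)`. Mehler kernels satisfy
`K_s ∘ K_u = K_{su}` and `K_0 = ψ_κ ⊗ ψ_κ`; composing with `K_0` shows `K_t ψ_κ = ψ_κ`.
On the orthogonal complement of `ψ_κ`, `K_s` acts as `K_s - K_0`, whose Hilbert–Schmidt norm
squared is `∫ (K_{s²}(x,x) - K_0(x,x)) dx = s²/(1-s²)`; this is below `1/2` only for small `s`.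
For general `t`, the identity `‖K_s φ‖² = ⟨φ, K_{s²} φ⟩` and Cauchy–Schwarz give
`‖K_s φ‖² ≤ (‖K_{s²} φ‖² + ‖φ‖²)/2`, which carries the bound at `s = t^{2^n}` back to `s = t`.
-/

open MeasureTheory Real Function

section L2

variable {α : Type*} [MeasurableSpace α] {μ : Measure α} {f g : α → ℝ}

theorem sq_integral_mul_le (hf : MemLp f 2 μ) (hg : MemLp g 2 μ) :
    (∫ a, f a * g a ∂μ) ^ 2 ≤ (∫ a, f a ^ 2 ∂μ) * ∫ a, g a ^ 2 ∂μ := by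
  have inner_toLp : ∀ {u v : α → ℝ} (hu : MemLp u 2 μ) (hv : MemLp v 2 μ),
      @inner ℝ _ _ hu.toLp hv.toLp = ∫ a, u a * v a ∂μ := by
    intro u v hu hv
    rw [L2.inner_def]
    refine integral_congr_ae ?_
    filter_upwards [hu.coeFn_toLp, hv.coeFn_toLp] with a hua hva
    rw [hua, hva, real_inner_eq_re_inner, RCLike.inner_apply]
    simp [mul_comm]
  have h := real_inner_mul_inner_self_le hf.toLp hg.toLp
  simpa only [inner_toLp, ← sq] using h

theorem eLpNorm_two_eq_ofReal_sqrt (hf : MemLp f 2 μ) :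
    eLpNorm f 2 μ = ENNReal.ofReal √(∫ a, f a ^ 2 ∂μ) := by
  rw [hf.eLpNorm_eq_integral_rpow_norm two_ne_zero ENNReal.ofNat_ne_top, sqrt_eq_rpow]
  norm_num

theorem eLpNorm_le_ofReal_sqrt_mul {c : ℝ} (hf : MemLp f 2 μ) (hg : MemLp g 2 μ)
    (h : ∫ a, f a ^ 2 ∂μ ≤ c * ∫ a, g a ^ 2 ∂μ) :
    eLpNorm f 2 μ ≤ ENNReal.ofReal √c * eLpNorm g 2 μ := by
  rw [eLpNorm_two_eq_ofReal_sqrt hf, eLpNorm_two_eq_ofReal_sqrt hg,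
    ← ENNReal.ofReal_mul (sqrt_nonneg _), ← sqrt_mul' _ (integral_nonneg fun a => sq_nonneg _)]
  exact ENNReal.ofReal_le_ofReal (sqrt_le_sqrt h)

end L2

section Kernel

variable {α : Type*} [MeasurableSpace α] {μ : Measure α} {K : α → α → ℝ} {g f h : α → ℝ}

theorem memLp_kernel_apply (hK : StronglyMeasurable (uncurry K)) (hg : MemLp g 2 μ)
    (hKg : ∀ x y, |K x y| ≤ g x * g y) (x : α) : MemLp (K x) 2 μ := by
  refine (hg.const_mul (g x)).of_le
    (hK.comp_measurable measurable_prodMk_left).aestronglyMeasurable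
    (Filter.Eventually.of_forall fun y => ?_)
  simpa [Real.norm_eq_abs] using (hKg x y).trans (le_abs_self _)

theorem memLp_integral_kernel_mul [SFinite μ] (hK : StronglyMeasurable (uncurry K))
    (hg : MemLp g 2 μ) (hKg : ∀ x y, |K x y| ≤ g x * g y) (hf : MemLp f 2 μ) :
    MemLp (fun x => ∫ y, K x y * f y ∂μ) 2 μ := by
  have hgf : Integrable (fun y => g y * |f y|) μ := hg.integrable_mul hf.abs
  refine (hg.mul_const (∫ y, g y * |f y| ∂μ)).of_le
    (hK.aestronglyMeasurable.mul hf.1.comp_snd).integral_prod_right'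
    (Filter.Eventually.of_forall fun x => ?_)
  calc ‖∫ y, K x y * f y ∂μ‖ ≤ ∫ y, g x * (g y * |f y|) ∂μ := by
        refine norm_integral_le_of_norm_le (hgf.const_mul _)
          (Filter.Eventually.of_forall fun y => ?_)
        rw [norm_mul, Real.norm_eq_abs, Real.norm_eq_abs, ← mul_assoc]
        exact mul_le_mul_of_nonneg_right (hKg x y) (abs_nonneg _)
    _ ≤ ‖g x * ∫ y, g y * |f y| ∂μ‖ := by
        rw [integral_const_mul]
        exact le_abs_self _

theorem integral_mul_integral_kernel_mul_comm [SFinite μ] (hK : StronglyMeasurable (uncurry K))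
    (hg : MemLp g 2 μ) (hKg : ∀ x y, |K x y| ≤ g x * g y) (hf : MemLp f 2 μ)
    (hh : MemLp h 2 μ) :
    ∫ x, h x * ∫ y, K x y * f y ∂μ ∂μ = ∫ y, f y * ∫ x, K x y * h x ∂μ ∂μ := by
  have hint : Integrable (uncurry fun x y => h x * (K x y * f y)) (μ.prod μ) := by
    refine Integrable.mono' ((hh.abs.integrable_mul hg).mul_prod (hg.integrable_mul hf.abs))
      (hh.1.comp_fst.mul (hK.aestronglyMeasurable.mul hf.1.comp_snd))
      (Filter.Eventually.of_forall fun p => ?_)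
    rw [uncurry_def, norm_mul, norm_mul, Real.norm_eq_abs, Real.norm_eq_abs, Real.norm_eq_abs]
    calc |h p.1| * (|K p.1 p.2| * |f p.2|) ≤ |h p.1| * (g p.1 * g p.2 * |f p.2|) := by
          gcongr; exact hKg p.1 p.2
      _ = |h p.1| * g p.1 * (g p.2 * |f p.2|) := by ring
  calc ∫ x, h x * ∫ y, K x y * f y ∂μ ∂μ = ∫ x, ∫ y, h x * (K x y * f y) ∂μ ∂μ := by
        simp only [integral_const_mul]
    _ = ∫ y, ∫ x, h x * (K x y * f y) ∂μ ∂μ := integral_integral_swap hint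
    _ = ∫ y, f y * ∫ x, K x y * h x ∂μ ∂μ := by
        simp only [← integral_const_mul]
        congr 1; ext y; congr 1; ext x; ring

end Kernel

theorem le_one_sub_div_pow_mul_of_le_add_div_two {a : ℕ → ℝ} {N c : ℝ}
    (hstep : ∀ j, a j ≤ (a (j + 1) + N) / 2) (n : ℕ) (hn : a n ≤ (1 - c) * N) :
    a 0 ≤ (1 - c / 2 ^ n) * N := by
  induction n generalizing a with
  | zero => simpa using hn
  | succ n ih =>
    have h1 : a 1 ≤ (1 - c / 2 ^ n) * N := ih (fun j => hstep (j + 1)) hn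
    calc a 0 ≤ (a 1 + N) / 2 := hstep 0
      _ ≤ ((1 - c / 2 ^ n) * N + N) / 2 := by gcongr
      _ = (1 - c / 2 ^ (n + 1)) * N := by ring

theorem integral_exp_neg_mul_sq_add_mul {b : ℝ} (hb : 0 < b) (c : ℝ) :
    ∫ y : ℝ, exp (-b * y ^ 2 + c * y) = √(π / b) * exp (c ^ 2 / (4 * b)) := by
  have h : ∀ y : ℝ, -b * y ^ 2 + c * y = -b * (y - c / (2 * b)) ^ 2 + c ^ 2 / (4 * b) := by
    intro y; field_simp; ring
  simp_rw [h, exp_add]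
  rw [integral_mul_const, integral_sub_right_eq_self (fun y => exp (-b * y ^ 2)),
    integral_gaussian]

theorem memLp_exp_neg_mul_sq {a : ℝ} (ha : 0 < a) :
    MemLp (fun x : ℝ => exp (-a * x ^ 2)) 2 volume := by
  refine (memLp_two_iff_integrable_sq (by fun_prop)).2 ?_
  refine (integrable_exp_neg_mul_sq (by positivity : 0 < 2 * a)).congr
    (Filter.Eventually.of_forall fun x => ?_)
  simp only [← exp_nat_mul]
  ring_nf

theorem psi_pos {κ : ℝ} (hκ : 0 < κ) (x : ℝ) : 0 < psi κ x := by
  unfold psi; positivity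

-- Mehler's kernel `∑ₙ sⁿ hₙ(x) hₙ(y)`, for the Hermite functions `hₙ` orthonormal in `L²(ℝ)`
-- with `h₀ = ψ_κ`.
noncomputable def mehlerKernel (κ s x y : ℝ) : ℝ :=
  √(κ / (π * (1 - s ^ 2))) *
    exp (-(κ * ((1 + s ^ 2) * (x ^ 2 + y ^ 2) - 4 * s * x * y)) / (2 * (1 - s ^ 2)))

noncomputable def mehlerOp (κ s : ℝ) (φ : ℝ → ℝ) (x : ℝ) : ℝ :=
  ∫ y, mehlerKernel κ s x y * φ y

section Mehler

variable {κ s u : ℝ}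

theorem mehlerKernel_comm (κ s x y : ℝ) : mehlerKernel κ s x y = mehlerKernel κ s y x := by
  unfold mehlerKernel; ring_nf

theorem mehlerKernel_nonneg (κ s x y : ℝ) : 0 ≤ mehlerKernel κ s x y := by
  unfold mehlerKernel; positivity

theorem continuous_uncurry_mehlerKernel (κ s : ℝ) : Continuous (uncurry (mehlerKernel κ s)) := by
  unfold mehlerKernel; fun_prop

theorem mehlerKernel_zero (hκ : 0 < κ) (x y : ℝ) :
    mehlerKernel κ 0 x y = psi κ x * psi κ y := by
  have h : √(κ / π) = (κ / π) ^ ((1 : ℝ) / 4) * (κ / π) ^ ((1 : ℝ) / 4) := by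
    rw [← rpow_add (by positivity), sqrt_eq_rpow]; norm_num
  unfold mehlerKernel psi
  rw [mul_mul_mul_comm, ← exp_add, ← h]
  congr 1
  · norm_num
  · congr 1; ring

theorem integral_mehlerKernel_mul_mehlerKernel (hκ : 0 < κ) (hs : s ^ 2 < 1) (hu : u ^ 2 < 1)
    (x z : ℝ) :
    ∫ y, mehlerKernel κ s x y * mehlerKernel κ u y z = mehlerKernel κ (s * u) x z := by
  have hs' : 0 < 1 - s ^ 2 := by linarith
  have hu' : 0 < 1 - u ^ 2 := by linarith
  have hsu : 0 < 1 - s ^ 2 * u ^ 2 := by nlinarith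
  set B := κ * (1 - s ^ 2 * u ^ 2) / ((1 - s ^ 2) * (1 - u ^ 2)) with hB
  set C := 2 * κ * s * x / (1 - s ^ 2) + 2 * κ * u * z / (1 - u ^ 2) with hC
  set E := -(κ * (1 + s ^ 2) * x ^ 2) / (2 * (1 - s ^ 2))
    - κ * (1 + u ^ 2) * z ^ 2 / (2 * (1 - u ^ 2)) with hE
  have hprod : ∀ y, mehlerKernel κ s x y * mehlerKernel κ u y z =
      √(κ / (π * (1 - s ^ 2))) * √(κ / (π * (1 - u ^ 2))) * exp E
        * exp (-B * y ^ 2 + C * y) := by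
    intro y
    unfold mehlerKernel
    rw [mul_assoc _ (exp E), ← exp_add, mul_mul_mul_comm, ← exp_add]
    congr 2
    rw [hB, hC, hE]
    field_simp
    ring
  simp_rw [hprod]
  rw [integral_const_mul, integral_exp_neg_mul_sq_add_mul (by positivity)]
  have hsqrt : √(κ / (π * (1 - s ^ 2))) * √(κ / (π * (1 - u ^ 2))) * √(π / B)
      = √(κ / (π * (1 - (s * u) ^ 2))) := by
    rw [← sqrt_mul (by positivity), ← sqrt_mul (by positivity), hB]
    congr 1
    field_simp
  have hexp : E + C ^ 2 / (4 * B)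
      = -(κ * ((1 + (s * u) ^ 2) * (x ^ 2 + z ^ 2) - 4 * (s * u) * x * z))
          / (2 * (1 - (s * u) ^ 2)) := by
    rw [hE, hC, hB]
    field_simp
    ring
  unfold mehlerKernel
  rw [← hsqrt, ← hexp, exp_add]
  ring

theorem exists_memLp_abs_mehlerKernel_le (hκ : 0 < κ) (hs : s ^ 2 < 1) :
    ∃ g : ℝ → ℝ, MemLp g 2 volume ∧ ∀ x y, |mehlerKernel κ s x y| ≤ g x * g y := by
  have habs : |s| < 1 := (sq_lt_one_iff_abs_lt_one s).mp hs
  have hs' : 0 < 1 - s ^ 2 := by linarith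
  have habs' : 0 < 1 - |s| := by linarith
  set c := √(κ / (π * (1 - s ^ 2)))
  set a := κ * (1 - |s|) ^ 2 / (2 * (1 - s ^ 2))
  refine ⟨fun x => √c * exp (-a * x ^ 2), (memLp_exp_neg_mul_sq (by positivity)).const_mul _,
    fun x y => ?_⟩
  -- `(1 + s²)(x² + y²) - 4sxy ≥ (1 - |s|)²(x² + y²)`: the difference is `≥ 2|s|(|x| - |y|)²`.
  have hxy : 0 ≤ 2 * |s| * (x ^ 2 + y ^ 2) - 4 * s * x * y := by
    have : s * (x * y) ≤ |s| * (|x| * |y|) := by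
      rw [← abs_mul, ← abs_mul]; exact le_abs_self _
    nlinarith [sq_abs x, sq_abs y, mul_nonneg (abs_nonneg s) (sq_nonneg (|x| - |y|))]
  rw [abs_of_nonneg (mehlerKernel_nonneg _ _ _ _), mul_mul_mul_comm,
    mul_self_sqrt (sqrt_nonneg _), ← exp_add]
  refine mul_le_mul_of_nonneg_left (exp_le_exp.2 ?_) (sqrt_nonneg _)
  rw [div_le_iff₀ (by positivity)]
  simp only [a]
  field_simp
  nlinarith [sq_abs s, mul_le_mul_of_nonneg_left hxy hκ.le]

theorem memLp_mehlerKernel (hκ : 0 < κ) (hs : s ^ 2 < 1) (x : ℝ) :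
    MemLp (mehlerKernel κ s x) 2 volume :=
  have ⟨_, hg, hKg⟩ := exists_memLp_abs_mehlerKernel_le hκ hs
  memLp_kernel_apply (continuous_uncurry_mehlerKernel κ s).stronglyMeasurable hg hKg x

theorem memLp_mehlerOp (hκ : 0 < κ) (hs : s ^ 2 < 1) {φ : ℝ → ℝ} (hφ : MemLp φ 2 volume) :
    MemLp (mehlerOp κ s φ) 2 volume :=
  have ⟨_, hg, hKg⟩ := exists_memLp_abs_mehlerKernel_le hκ hs
  memLp_integral_kernel_mul (continuous_uncurry_mehlerKernel κ s).stronglyMeasurable hg hKg hφ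

theorem integral_mul_mehlerOp_comm (hκ : 0 < κ) (hs : s ^ 2 < 1) {f h : ℝ → ℝ}
    (hf : MemLp f 2 volume) (hh : MemLp h 2 volume) :
    ∫ x, h x * mehlerOp κ s f x = ∫ x, f x * mehlerOp κ s h x := by
  obtain ⟨_, hg, hKg⟩ := exists_memLp_abs_mehlerKernel_le hκ hs
  simp only [mehlerOp]
  rw [integral_mul_integral_kernel_mul_comm
    (continuous_uncurry_mehlerKernel κ s).stronglyMeasurable hg hKg hf hh]
  simp only [mehlerKernel_comm κ s _ (_ : ℝ)]

theorem mehlerKernel_diag (hs : s ^ 2 < 1) (x : ℝ) :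
    mehlerKernel κ s x x =
      √(κ / (π * (1 - s ^ 2))) * exp (-(κ * (1 - s) / (1 + s)) * x ^ 2) := by
  have h1 : 0 < 1 + s := by nlinarith
  have h2 : 0 < 1 - s := by nlinarith
  unfold mehlerKernel
  congr 2
  rw [show 1 - s ^ 2 = (1 - s) * (1 + s) by ring]
  field_simp
  ring

theorem integral_mehlerKernel_diag (hκ : 0 < κ) (hs : s ^ 2 < 1) :
    ∫ x, mehlerKernel κ s x x = 1 / (1 - s) := by
  have h1 : 0 < 1 + s := by nlinarith
  have h2 : 0 < 1 - s := by nlinarith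
  simp_rw [mehlerKernel_diag hs]
  rw [integral_const_mul, integral_gaussian, ← sqrt_mul (by positivity),
    ← sqrt_sq (by positivity : 0 ≤ 1 / (1 - s))]
  congr 1
  rw [show 1 - s ^ 2 = (1 - s) * (1 + s) by ring]
  field_simp

theorem integrable_mehlerKernel_diag (hκ : 0 < κ) (hs : s ^ 2 < 1) :
    Integrable fun x => mehlerKernel κ s x x := by
  have h1 : 0 < 1 + s := by nlinarith
  have h2 : 0 < 1 - s := by nlinarith
  simp_rw [mehlerKernel_diag hs]
  exact (integrable_exp_neg_mul_sq (by positivity)).const_mul _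

theorem mehlerOp_psi (hκ : 0 < κ) (hs : s ^ 2 < 1) : mehlerOp κ s (psi κ) = psi κ := by
  ext x
  have h := integral_mehlerKernel_mul_mehlerKernel hκ hs (by norm_num : (0 : ℝ) ^ 2 < 1) x 0
  simp only [mul_zero, mehlerKernel_zero hκ, ← mul_assoc, integral_mul_const] at h
  exact mul_right_cancel₀ (psi_pos hκ 0).ne' h

theorem mehlerOp_zero_of_orthogonal (hκ : 0 < κ) {φ : ℝ → ℝ} (hφ : ∫ y, psi κ y * φ y = 0) :
    mehlerOp κ 0 φ = 0 := by
  ext x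
  simp only [mehlerOp, mehlerKernel_zero hκ, mul_assoc, integral_const_mul, hφ, mul_zero,
    Pi.zero_apply]

theorem mehlerOp_mehlerOp (hκ : 0 < κ) (hs : s ^ 2 < 1) (hu : u ^ 2 < 1) {φ : ℝ → ℝ}
    (hφ : MemLp φ 2 volume) : mehlerOp κ s (mehlerOp κ u φ) = mehlerOp κ (s * u) φ := by
  ext x
  have h : ∀ z, mehlerOp κ u (mehlerKernel κ s x) z = mehlerKernel κ (s * u) x z := by
    intro z
    simp only [mehlerOp, mehlerKernel_comm κ u z, mul_comm (mehlerKernel κ u _ _)]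
    exact integral_mehlerKernel_mul_mehlerKernel hκ hs hu x z
  calc mehlerOp κ s (mehlerOp κ u φ) x = ∫ z, φ z * mehlerOp κ u (mehlerKernel κ s x) z :=
        integral_mul_mehlerOp_comm hκ hu hφ (memLp_mehlerKernel hκ hs x)
    _ = mehlerOp κ (s * u) φ x := by
        simp only [h, mul_comm (φ _)]
        rfl

theorem integral_mehlerOp_sq (hκ : 0 < κ) (hs : s ^ 2 < 1) {φ : ℝ → ℝ}
    (hφ : MemLp φ 2 volume) :
    ∫ x, mehlerOp κ s φ x ^ 2 = ∫ x, φ x * mehlerOp κ (s * s) φ x := by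
  simp only [sq]
  rw [integral_mul_mehlerOp_comm hκ hs hφ (memLp_mehlerOp hκ hs hφ),
    mehlerOp_mehlerOp hκ hs hs hφ]

theorem integral_sq_mehlerKernel_sub_mehlerKernel (hκ : 0 < κ) (hs : s ^ 2 < 1)
    (hu : u ^ 2 < 1) (y : ℝ) :
    ∫ z, (mehlerKernel κ s y z - mehlerKernel κ u y z) ^ 2 =
      mehlerKernel κ (s * s) y y - 2 * mehlerKernel κ (s * u) y y
        + mehlerKernel κ (u * u) y y := by
  have hprod : ∀ {a b : ℝ}, a ^ 2 < 1 → b ^ 2 < 1 →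
      ∫ z, mehlerKernel κ a y z * mehlerKernel κ b y z = mehlerKernel κ (a * b) y y := by
    intro a b ha hb
    simp only [mehlerKernel_comm κ b y]
    exact integral_mehlerKernel_mul_mehlerKernel hκ ha hb y y
  have hint : ∀ {a b : ℝ}, a ^ 2 < 1 → b ^ 2 < 1 →
      Integrable fun z => mehlerKernel κ a y z * mehlerKernel κ b y z := fun ha hb =>
    (memLp_mehlerKernel hκ ha y).integrable_mul (memLp_mehlerKernel hκ hb y)
  have hexpand : ∀ a b : ℝ, (a - b) ^ 2 = a * a - 2 * (a * b) + b * b := fun a b => by ring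
  simp only [hexpand]
  rw [integral_add ?_ (hint hu hu), integral_sub (hint hs hs) ((hint hs hu).const_mul 2),
    integral_const_mul, hprod hs hs, hprod hs hu, hprod hu hu]
  exact (hint hs hs).sub ((hint hs hu).const_mul 2)

theorem sq_mehlerOp_le_of_orthogonal (hκ : 0 < κ) (hs : s ^ 2 < 1) {φ : ℝ → ℝ}
    (hφ : MemLp φ 2 volume) (horth : ∫ y, psi κ y * φ y = 0) (x : ℝ) :
    mehlerOp κ s φ x ^ 2 ≤
      (mehlerKernel κ (s * s) x x - mehlerKernel κ 0 x x) * ∫ y, φ y ^ 2 := by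
  have h0 : (0 : ℝ) ^ 2 < 1 := by norm_num
  have hsub : MemLp (fun y => mehlerKernel κ s x y - mehlerKernel κ 0 x y) 2 volume :=
    (memLp_mehlerKernel hκ hs x).sub (memLp_mehlerKernel hκ h0 x)
  have hQ : mehlerOp κ s φ x = ∫ y, (mehlerKernel κ s x y - mehlerKernel κ 0 x y) * φ y := by
    have h := congrFun (mehlerOp_zero_of_orthogonal hκ horth) x
    simp only [mehlerOp, Pi.zero_apply] at h
    simp only [sub_mul]
    rw [integral_sub ?_ ?_, h, sub_zero, mehlerOp]
    exacts [(memLp_mehlerKernel hκ hs x).integrable_mul hφ,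
      (memLp_mehlerKernel hκ h0 x).integrable_mul hφ]
  have hnorm := integral_sq_mehlerKernel_sub_mehlerKernel hκ hs h0 x
  simp only [mul_zero] at hnorm
  rw [hQ]
  convert sq_integral_mul_le hsub hφ using 2
  rw [hnorm]
  ring

theorem integral_mehlerOp_sq_le_of_orthogonal (hκ : 0 < κ) (hs : s ^ 2 < 1) {φ : ℝ → ℝ}
    (hφ : MemLp φ 2 volume) (horth : ∫ y, psi κ y * φ y = 0) :
    ∫ x, mehlerOp κ s φ x ^ 2 ≤ s ^ 2 / (1 - s ^ 2) * ∫ x, φ x ^ 2 := by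
  have h0 : (0 : ℝ) ^ 2 < 1 := by norm_num
  have hss : (s * s) ^ 2 < 1 := by nlinarith
  have hdiag := (integrable_mehlerKernel_diag hκ hss).sub (integrable_mehlerKernel_diag hκ h0)
  calc ∫ x, mehlerOp κ s φ x ^ 2
      ≤ ∫ x, (mehlerKernel κ (s * s) x x - mehlerKernel κ 0 x x) * ∫ y, φ y ^ 2 :=
        integral_mono (memLp_mehlerOp hκ hs hφ).integrable_sq (hdiag.mul_const _)
          (sq_mehlerOp_le_of_orthogonal hκ hs hφ horth)
    _ = (1 / (1 - s * s) - 1 / (1 - 0)) * ∫ x, φ x ^ 2 := by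
        rw [integral_mul_const, integral_sub (integrable_mehlerKernel_diag hκ hss)
          (integrable_mehlerKernel_diag hκ h0), integral_mehlerKernel_diag hκ hss,
          integral_mehlerKernel_diag hκ h0]
    _ = s ^ 2 / (1 - s ^ 2) * ∫ x, φ x ^ 2 := by
        have : 1 - s ^ 2 ≠ 0 := by linarith
        field_simp
        ring

theorem exists_lt_one_integral_mehlerOp_sq_le {t : ℝ} (hκ : 0 < κ) (ht : t ^ 2 < 1) :
    ∃ c < 1, ∀ φ : ℝ → ℝ, MemLp φ 2 volume → ∫ y, psi κ y * φ y = 0 →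
      ∫ x, mehlerOp κ t φ x ^ 2 ≤ c * ∫ x, φ x ^ 2 := by
  obtain ⟨n, hn⟩ := exists_pow_lt_of_lt_one (by norm_num : (0 : ℝ) < 1 / 3) ht
  refine ⟨1 - 1 / 2 / 2 ^ n, sub_lt_self _ (by positivity), fun φ hφ horth => ?_⟩
  set N := ∫ x, φ x ^ 2
  have hpow : ∀ j : ℕ, (t ^ 2 ^ j) ^ 2 = (t ^ 2) ^ 2 ^ j := fun j => by
    rw [← pow_mul, ← pow_mul, mul_comm]
  have hlt : ∀ j : ℕ, (t ^ 2 ^ j) ^ 2 < 1 := fun j => by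
    rw [hpow]; exact pow_lt_one₀ (sq_nonneg t) ht (by positivity)
  set a : ℕ → ℝ := fun j => ∫ x, mehlerOp κ (t ^ 2 ^ j) φ x ^ 2
  have hstep : ∀ j, a j ≤ (a (j + 1) + N) / 2 := by
    intro j
    have haj : a j = ∫ x, φ x * mehlerOp κ (t ^ 2 ^ (j + 1)) φ x := by
      rw [pow_succ, pow_mul, sq]
      exact integral_mehlerOp_sq hκ (hlt j) hφ
    have hcs : a j ^ 2 ≤ N * a (j + 1) :=
      haj ▸ sq_integral_mul_le hφ (memLp_mehlerOp hκ (hlt (j + 1)) hφ)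
    have hN : 0 ≤ N := integral_nonneg fun x => sq_nonneg _
    have ha : 0 ≤ a (j + 1) := integral_nonneg fun x => sq_nonneg _
    nlinarith [sq_nonneg (a (j + 1) - N)]
  have hbase : a n ≤ (1 - 1 / 2) * N := by
    have hsmall : (t ^ 2 ^ n) ^ 2 < 1 / 3 := by
      rw [hpow]
      exact (pow_le_pow_of_le_one (sq_nonneg t) ht.le Nat.lt_two_pow_self.le).trans_lt hn
    refine (integral_mehlerOp_sq_le_of_orthogonal hκ (hlt n) hφ horth).trans ?_
    gcongr
    rw [div_le_iff₀ (by linarith)]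
    linarith
  simpa [a] using le_one_sub_div_pow_mul_of_le_add_div_two hstep n hbase

end Mehler

section Transfer

variable {α κ : ℝ}

theorem one_sub_sq_neg_div_one_add (hκ0 : 0 ≤ κ) (hκ : κ ^ 2 = 1 - α ^ 2) :
    1 - (-α / (1 + κ)) ^ 2 = 2 * κ / (1 + κ) := by
  field_simp
  linear_combination -hκ

theorem mehlerKernel_eq_pInf (hκ0 : 0 < κ) (hκ : κ ^ 2 = 1 - α ^ 2) (x y : ℝ) :
    mehlerKernel κ (-α / (1 + κ)) x y = (√(2 * π / (1 + κ)))⁻¹ * pInf α x y := by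
  have h2 : 1 + (-α / (1 + κ)) ^ 2 = 2 / (1 + κ) := by
    field_simp
    linear_combination hκ
  unfold mehlerKernel pInf
  rw [one_sub_sq_neg_div_one_add hκ0.le hκ, h2, ← sqrt_inv]
  congr 2
  · field_simp
  · field_simp
    ring

theorem Phat_eq_mehlerOp (hα : α ^ 2 < 1) :
    Phat α = mehlerOp √(1 - α ^ 2) (-α / (1 + √(1 - α ^ 2))) := by
  ext φ x
  simp only [Phat, mehlerOp, mehlerKernel_eq_pInf (sqrt_pos.2 (by linarith))
    (sq_sqrt (by linarith)), mul_assoc, integral_const_mul]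

end Transfer

/-- `ψ_κ` is a fixed point of `P̂_∞`, and `P̂_∞` is a contraction on the
orthogonal complement of `ψ_κ` in `L²(ℝ)`. -/
theorem stmt_9 (α : ℝ) (hα : α ∈ Set.Ioo (-1 : ℝ) 1) (κ : ℝ)
    (hκ : κ = Real.sqrt (1 - α ^ 2)) :
    (∀ x : ℝ, Phat α (psi κ) x = psi κ x) ∧
    ∃ μ : ℝ, μ < 1 ∧
      ∀ φ : ℝ → ℝ, MeasureTheory.MemLp φ 2 MeasureTheory.volume →
        (∫ y : ℝ, psi κ y * φ y) = 0 →
        MeasureTheory.eLpNorm (Phat α φ) 2 MeasureTheory.volume ≤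
          ENNReal.ofReal μ * MeasureTheory.eLpNorm φ 2 MeasureTheory.volume := by
  have hα2 : α ^ 2 < 1 := by nlinarith [hα.1, hα.2]
  have hκ0 : 0 < κ := hκ ▸ sqrt_pos.2 (by linarith)
  have ht : (-α / (1 + κ)) ^ 2 < 1 := by
    have h := one_sub_sq_neg_div_one_add hκ0.le (hκ ▸ sq_sqrt (by linarith))
    have : 0 < 2 * κ / (1 + κ) := by positivity
    linarith
  rw [Phat_eq_mehlerOp hα2, ← hκ]
  refine ⟨congrFun (mehlerOp_psi hκ0 ht), ?_⟩
  obtain ⟨c, hc, hcontract⟩ := exists_lt_one_integral_mehlerOp_sq_le hκ0 ht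
  exact ⟨√c, (sqrt_lt' one_pos).2 (by linarith), fun φ hφ horth =>
    eLpNorm_le_ofReal_sqrt_mul (memLp_mehlerOp hκ0 ht hφ) hφ (hcontract φ hφ horth)⟩
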